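/- arXiv:1801.07609 — 2 statements merged into one kernel-verified Lean document; each statement's English description precedes it below -/
import Mathlib

section
/- The hyperbolic space (ℝⁿ, d_h) is absolutely homogeneous: every isometric map v : A → ℝⁿ (with respect to d_h) defined on a non-empty subset A of ℝⁿ extends to a surjective isometry of (ℝⁿ, d_h). -/
noncomputable def arcosh (t : ℝ) : ℝ := Real.log (t + Real.sqrt (t ^ 2 - 1))

noncomputable def br {n : ℕ} (x : EuclideanSpace ℝ (Fin n)) : ℝ :=
  Real.sqrt (1 + ‖x‖ ^ 2)

noncomputable def dh {n : ℕ} (x y : EuclideanSpace ℝ (Fin n)) : ℝ :=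
  arcosh (br x * br y - inner ℝ x y)

noncomputable def T {n : ℕ} (y x : EuclideanSpace ℝ (Fin n)) : EuclideanSpace ℝ (Fin n) :=
  x + (br x + inner ℝ x y / (br y + 1)) • y

/-!
Hyperbolic translations `T y` are `dh`-isometries of `ℝⁿ` with inverse `T (-y)` and `T y 0 = y`;
conjugating by them reduces to an isometry `u` on a set containing `0` with `u 0 = 0`.
Since `cosh (dh x 0) = [x]`, such a `u` preserves `[·]` and hence, reading off
`cosh dh = [x][y] - ⟨x, y⟩`, the inner product. An inner-product-preserving map on a set extends
to a linear isometry (well defined on the span because it preserves norms of linear combinations),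
and linear isometries preserve `dh`.
-/

open scoped InnerProductSpace

open Finsupp in
theorem inner_linearCombination_eq_of_inner_eq {𝕜 V W ι : Type*} [RCLike 𝕜]
    [NormedAddCommGroup V] [InnerProductSpace 𝕜 V] [NormedAddCommGroup W] [InnerProductSpace 𝕜 W]
    {v : ι → V} {w : ι → W} (h : ∀ i j, ⟪w i, w j⟫_𝕜 = ⟪v i, v j⟫_𝕜)
    (c d : ι →₀ 𝕜) :
    ⟪linearCombination 𝕜 w c, linearCombination 𝕜 w d⟫_𝕜 =
      ⟪linearCombination 𝕜 v c, linearCombination 𝕜 v d⟫_𝕜 := by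
  simp only [linearCombination_apply, Finsupp.sum, sum_inner, inner_sum, inner_smul_left,
    inner_smul_right, h]

open Finsupp in
theorem exists_linearIsometry_eqOn_of_inner_eq {𝕜 V : Type*} [RCLike 𝕜]
    [NormedAddCommGroup V] [InnerProductSpace 𝕜 V] [FiniteDimensional 𝕜 V]
    {A : Set V} {u : V → V} (hu : ∀ x ∈ A, ∀ y ∈ A, ⟪u x, u y⟫_𝕜 = ⟪x, y⟫_𝕜) :
    ∃ g : V →ₗᵢ[𝕜] V, Set.EqOn g u A := by
  let φ := linearCombination 𝕜 ((↑) : A → V)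
  let ψ := linearCombination 𝕜 (u ∘ ((↑) : A → V))
  have hinner := inner_linearCombination_eq_of_inner_eq (v := ((↑) : A → V))
    (w := u ∘ ((↑) : A → V)) fun i j => hu i i.2 j j.2
  have hnorm (c : A →₀ 𝕜) : ‖ψ c‖ = ‖φ c‖ := by
    simp only [@norm_eq_sqrt_re_inner 𝕜, ψ, φ, hinner]
  have hker : LinearMap.ker φ ≤ LinearMap.ker ψ := fun c hc => by
    simpa [← norm_eq_zero, hnorm] using hc
  -- `φ c ↦ ψ c` is well defined on the range of `φ` because `ker φ ≤ ker ψ`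
  let L₀ := (LinearMap.ker φ).liftQ ψ hker ∘ₗ φ.quotKerEquivRange.symm.toLinearMap
  have hL₀ (c : A →₀ 𝕜) : L₀ ⟨φ c, LinearMap.mem_range_self φ c⟩ = ψ c := by
    simp [L₀, LinearMap.quotKerEquivRange_symm_apply_image]
  let L : LinearMap.range φ →ₗᵢ[𝕜] V :=
    { toLinearMap := L₀
      norm_map' := by
        rintro ⟨_, c, rfl⟩
        exact (congrArg norm (hL₀ c)).trans (hnorm c) }
  refine ⟨L.extend, fun a ha => ?_⟩
  have hφ : φ (single ⟨a, ha⟩ 1) = a := by simp [φ]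
  calc L.extend a = L.extend (φ (single ⟨a, ha⟩ 1)) := by rw [hφ]
    _ = ψ (single ⟨a, ha⟩ 1) := (L.extend_apply ⟨_, LinearMap.mem_range_self _ _⟩).trans (hL₀ _)
    _ = u a := by simp [ψ]

theorem inner_add_smul_add_smul {V : Type*} [NormedAddCommGroup V] [InnerProductSpace ℝ V]
    (x x' y : V) (c c' : ℝ) :
    ⟪x + c • y, x' + c' • y⟫_ℝ =
      ⟪x, x'⟫_ℝ + c' * ⟪x, y⟫_ℝ + c * ⟪x', y⟫_ℝ + c * c' * ⟪y, y⟫_ℝ := by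
  simp only [inner_add_left, inner_add_right, real_inner_smul_left, real_inner_smul_right,
    real_inner_comm y x']
  ring

section Hyperbolic

variable {n : ℕ}

theorem one_le_br (x : EuclideanSpace ℝ (Fin n)) : 1 ≤ br x :=
  Real.one_le_sqrt.mpr (by simp)

theorem br_pos (x : EuclideanSpace ℝ (Fin n)) : 0 < br x :=
  zero_lt_one.trans_le (one_le_br x)

theorem br_add_one_ne_zero (x : EuclideanSpace ℝ (Fin n)) : br x + 1 ≠ 0 :=
  (add_pos (br_pos x) one_pos).ne'

theorem br_sq (x : EuclideanSpace ℝ (Fin n)) : br x ^ 2 = 1 + ‖x‖ ^ 2 :=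
  Real.sq_sqrt (by positivity)

@[simp]
theorem br_neg (x : EuclideanSpace ℝ (Fin n)) : br (-x) = br x := by
  simp [br]

@[simp]
theorem br_zero : br (0 : EuclideanSpace ℝ (Fin n)) = 1 := by
  simp [br]

theorem real_inner_self_eq_br_sq_sub_one (x : EuclideanSpace ℝ (Fin n)) :
    ⟪x, x⟫_ℝ = br x ^ 2 - 1 := by
  rw [real_inner_self_eq_norm_sq, br_sq]
  ring

theorem one_le_br_mul_br_sub_inner (x y : EuclideanSpace ℝ (Fin n)) :
    1 ≤ br x * br y - ⟪x, y⟫_ℝ := by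
  -- `(1 + a²)(1 + b²) = (1 + ab)² + (a - b)²`
  have hbr : 1 + ‖x‖ * ‖y‖ ≤ br x * br y := by
    refine le_of_sq_le_sq ?_ (mul_pos (br_pos x) (br_pos y)).le
    rw [mul_pow, br_sq, br_sq]
    nlinarith [sq_nonneg (‖x‖ - ‖y‖)]
  linarith [real_inner_le_norm x y]

-- `arcosh` is `Real.arcosh` by definition.
theorem dh_eq_dh_iff {x y x' y' : EuclideanSpace ℝ (Fin n)} :
    dh x y = dh x' y' ↔ br x * br y - ⟪x, y⟫_ℝ = br x' * br y' - ⟪x', y'⟫_ℝ :=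
  Real.arcosh_injOn.eq_iff (one_le_br_mul_br_sub_inner x y) (one_le_br_mul_br_sub_inner x' y')

theorem dh_linearIsometry (g : EuclideanSpace ℝ (Fin n) →ₗᵢ[ℝ] EuclideanSpace ℝ (Fin n))
    (x y : EuclideanSpace ℝ (Fin n)) : dh (g x) (g y) = dh x y := by
  simp only [dh, br, g.norm_map, g.inner_map_map]

theorem br_T (y x : EuclideanSpace ℝ (Fin n)) : br (T y x) = br x * br y + ⟪x, y⟫_ℝ := by
  have hy := br_add_one_ne_zero y
  have hsq : 1 + ‖T y x‖ ^ 2 = (br x * br y + ⟪x, y⟫_ℝ) ^ 2 := by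
    rw [← real_inner_self_eq_norm_sq, T, inner_add_smul_add_smul,
      real_inner_self_eq_br_sq_sub_one, real_inner_self_eq_br_sq_sub_one]
    field_simp
    ring
  have hnonneg : 0 ≤ br x * br y + ⟪x, y⟫_ℝ := by
    have := one_le_br_mul_br_sub_inner x (-y)
    rw [br_neg, inner_neg_right] at this
    linarith
  rw [br, hsq, Real.sqrt_sq hnonneg]

theorem br_mul_br_sub_inner_T (y x x' : EuclideanSpace ℝ (Fin n)) :
    br (T y x) * br (T y x') - ⟪T y x, T y x'⟫_ℝ = br x * br x' - ⟪x, x'⟫_ℝ := by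
  have hy := br_add_one_ne_zero y
  rw [br_T, br_T, T, T, inner_add_smul_add_smul, real_inner_self_eq_br_sq_sub_one]
  field_simp
  ring

theorem dh_T (y x x' : EuclideanSpace ℝ (Fin n)) : dh (T y x) (T y x') = dh x x' := by
  rw [dh, dh, br_mul_br_sub_inner_T]

theorem T_neg_T (y x : EuclideanSpace ℝ (Fin n)) : T (-y) (T y x) = x := by
  have hy := br_add_one_ne_zero y
  set c := br x + ⟪x, y⟫_ℝ / (br y + 1) with hc
  have hinner : ⟪T y x, y⟫_ℝ = ⟪x, y⟫_ℝ + c * (br y ^ 2 - 1) := by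
    rw [T, inner_add_left, real_inner_smul_left, real_inner_self_eq_br_sq_sub_one]
  have hcoeff : br (T y x) + ⟪T y x, -y⟫_ℝ / (br (-y) + 1) = c := by
    rw [inner_neg_right, br_neg, br_T, hinner, hc]
    field_simp
    ring
  rw [T, hcoeff, T, smul_neg]
  abel

theorem T_T_neg (y x : EuclideanSpace ℝ (Fin n)) : T y (T (-y) x) = x := by
  simpa using T_neg_T (-y) x

theorem T_bijective (y : EuclideanSpace ℝ (Fin n)) : Function.Bijective (T y) :=
  Function.bijective_iff_has_inverse.mpr ⟨T (-y), T_neg_T y, T_T_neg y⟩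

@[simp]
theorem T_zero (y : EuclideanSpace ℝ (Fin n)) : T y 0 = y := by
  simp [T]

theorem inner_eq_of_dh_eq {A : Set (EuclideanSpace ℝ (Fin n))}
    {u : EuclideanSpace ℝ (Fin n) → EuclideanSpace ℝ (Fin n)} (h0 : 0 ∈ A) (hu0 : u 0 = 0)
    (hu : ∀ x ∈ A, ∀ y ∈ A, dh (u x) (u y) = dh x y) :
    ∀ x ∈ A, ∀ y ∈ A, ⟪u x, u y⟫_ℝ = ⟪x, y⟫_ℝ := by
  have hbr : ∀ z ∈ A, br (u z) = br z := fun z hz => by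
    simpa [hu0] using dh_eq_dh_iff.mp (hu z hz 0 h0)
  intro x hx y hy
  have := dh_eq_dh_iff.mp (hu x hx y hy)
  rw [hbr x hx, hbr y hy] at this
  linarith

end Hyperbolic

theorem dh_absolutely_homogeneous {n : ℕ} (A : Set (EuclideanSpace ℝ (Fin n)))
    (hA : A.Nonempty) (v : EuclideanSpace ℝ (Fin n) → EuclideanSpace ℝ (Fin n))
    (hv : ∀ x ∈ A, ∀ y ∈ A, dh (v x) (v y) = dh x y) :
    ∃ f : EuclideanSpace ℝ (Fin n) → EuclideanSpace ℝ (Fin n),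
      Function.Bijective f ∧ (∀ x y, dh (f x) (f y) = dh x y) ∧ ∀ a ∈ A, f a = v a := by
  obtain ⟨a, ha⟩ := hA
  let u := fun z => T (-v a) (v (T a z))
  have hu : ∀ z ∈ T a ⁻¹' A, ∀ w ∈ T a ⁻¹' A, dh (u z) (u w) = dh z w := fun z hz w hw => by
    simp only [u, dh_T, hv _ hz _ hw]
  have hu0 : u 0 = 0 := by simpa [u] using T_neg_T (v a) 0
  obtain ⟨g, hg⟩ :=
    exists_linearIsometry_eqOn_of_inner_eq (inner_eq_of_dh_eq (by simpa) hu0 hu)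
  refine ⟨T (v a) ∘ g ∘ T (-a), ?_, fun x y => ?_, fun x hx => ?_⟩
  · exact (T_bijective _).comp ((g.toLinearIsometryEquiv rfl).bijective.comp (T_bijective _))
  · simp only [Function.comp_apply, dh_T, dh_linearIsometry]
  · have hx' : T (-a) x ∈ T a ⁻¹' A := by simpa [T_T_neg]
    simp [hg hx', u, T_T_neg]
end

section
/- For any unit vector z ∈ ℝⁿ, the map γ_z : ℝ → ℝⁿ, γ_z(t) = sinh(t)·z, is an isometric embedding of (ℝ, Euclidean metric) into (ℝⁿ, d_h); i.e., d_h(γ_z(s), γ_z(t)) = |s - t| for all s, t ∈ ℝ. -/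
/- The metric restricted to a line through the origin only sees `[c • z] = √(1 + c²)`, and the
substitution `c = sinh u` turns `√(1 + a²)√(1 + b²) - ab` into `cosh (s - t)`. -/

lemma arcosh_eq_real_arcosh : arcosh = Real.arcosh := rfl

lemma arcosh_cosh (u : ℝ) : arcosh (Real.cosh u) = |u| := by
  rw [arcosh_eq_real_arcosh, ← Real.cosh_abs, Real.arcosh_cosh (abs_nonneg u)]

lemma sqrt_one_add_sinh_sq (u : ℝ) : √(1 + Real.sinh u ^ 2) = Real.cosh u := by
  rw [add_comm, ← Real.cosh_sq, Real.sqrt_sq (Real.cosh_pos u).le]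

section UnitLine

variable {n : ℕ} {z : EuclideanSpace ℝ (Fin n)}

lemma br_smul_of_norm_eq_one (hz : ‖z‖ = 1) (c : ℝ) : br (c • z) = √(1 + c ^ 2) := by
  rw [br, norm_smul, hz, mul_one, Real.norm_eq_abs, sq_abs]

lemma dh_smul_smul_of_norm_eq_one (hz : ‖z‖ = 1) (a b : ℝ) :
    dh (a • z) (b • z) = arcosh (√(1 + a ^ 2) * √(1 + b ^ 2) - a * b) := by
  rw [dh, br_smul_of_norm_eq_one hz, br_smul_of_norm_eq_one hz, real_inner_smul_left,
    real_inner_smul_right, real_inner_self_eq_norm_sq, hz, one_pow, mul_one]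

end UnitLine

theorem gamma_isometric {n : ℕ} (z : EuclideanSpace ℝ (Fin n)) (hz : ‖z‖ = 1)
    (s t : ℝ) : dh (Real.sinh s • z) (Real.sinh t • z) = |s - t| := by
  rw [dh_smul_smul_of_norm_eq_one hz, sqrt_one_add_sinh_sq, sqrt_one_add_sinh_sq,
    ← Real.cosh_sub, arcosh_cosh]
end
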